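/- Fix 0 < s < 1, k ∈ ℤ, ξ ∈ ℝ, and define A_{n,k}(ξ) = (1/2π) ∫₀^{2π} e^{ikθ} Tₙ(s cos(θ + ξ/n)) Tₙ(s cos θ) dθ. Then lim_{n→∞} A_{n,k}(ξ) = ((1 + (−1)ᵏ)/(4π)) ∫_{−s}^{s} e_k(x) cos(ξ √(s² − x²)/√(1 − x²)) dx/√(s² − x²), where e_k(x) = exp(i k arccos(x/s)). -/

import Mathlib

/-!
Write φ(θ) = arccos (s cos θ), so that Tₙ(s cos θ) = cos (n φ(θ)). Replacing n φ(θ + ξ/n) by its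
linearisation n φ(θ) + ξ φ'(θ) changes the integrals only by o(1) (dominated convergence), and the
product-to-sum formula then splits the integrand into e^{ikθ} cos (ξ φ'(θ)), which does not depend
on n, and e^{ikθ} cos (2n φ(θ) + ξ φ'(θ)). The integral of the latter tends to 0 by the
Riemann–Lebesgue lemma after the substitution u = φ(θ) on (0, π) and on (π, 2π), where φ is
monotone with nonvanishing derivative. Finally φ'(θ + π) = -φ'(θ) folds the remaining integral over
(0, 2π) onto (0, π) with the factor 1 + (-1)^k, and x = s cos θ turns it into the integral over
(-s, s).
-/

open Real Filter Topology MeasureTheory Set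
open Complex (I)

/-- `e_k(x) = exp(i k arccos(x/s))`. -/
noncomputable def ek (s : ℝ) (k : ℤ) (x : ℝ) : ℂ :=
  Complex.exp (Complex.I * k * Real.arccos (x / s))

/-- `A_{n,k}(ξ) = (1/2π) ∫₀^{2π} e^{ikθ} Tₙ(s cos(θ + ξ/n)) Tₙ(s cos θ) dθ`. -/
noncomputable def Ank (s : ℝ) (k : ℤ) (ξ : ℝ) (n : ℕ) : ℂ :=
  ((1 / (2 * Real.pi) : ℝ) : ℂ) * ∫ θ in (0:ℝ)..(2 * Real.pi),
    Complex.exp (Complex.I * k * θ) *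
      Complex.ofReal ((Polynomial.Chebyshev.T ℝ (n : ℤ)).eval (s * Real.cos (θ + ξ / n))) *
      Complex.ofReal ((Polynomial.Chebyshev.T ℝ (n : ℤ)).eval (s * Real.cos θ))

theorem tendsto_integral_mul_exp_cocompact (f : ℝ → ℂ) :
    Tendsto (fun m : ℝ => ∫ x, f x * Complex.exp (I * m * x)) (cocompact ℝ) (𝓝 0) := by
  have hscale : Tendsto (fun m : ℝ => (-(2 * π)⁻¹) * m) (cocompact ℝ) (cocompact ℝ) :=
    tendsto_cocompact_mul_left₀ (by simp [pi_ne_zero])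
  refine ((Real.tendsto_integral_exp_smul_cocompact f).comp hscale).congr fun m => ?_
  refine integral_congr_ae (Eventually.of_forall fun x => ?_)
  simp only [Circle.smul_def, Real.fourierChar_apply, smul_eq_mul]
  rw [mul_comm]
  congr 2
  push_cast
  field_simp

theorem tendsto_setIntegral_mul_exp_comp_cocompact {S : Set ℝ} (hS : MeasurableSet S)
    {φ φ' : ℝ → ℝ} (hφ : ∀ x ∈ S, HasDerivWithinAt φ (φ' x) S x) (hinj : InjOn φ S)
    (hφ' : ∀ x ∈ S, φ' x ≠ 0) (f : ℝ → ℂ) :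
    Tendsto (fun m : ℝ => ∫ x in S, f x * Complex.exp (I * m * φ x)) (cocompact ℝ) (𝓝 0) := by
  -- No integrability is needed: the change of variables formula and the Riemann–Lebesgue lemma
  -- also hold for non-integrable functions, whose integrals are `0`.
  set G : ℝ → ℂ := fun u => f (Function.invFunOn φ S u) / |φ' (Function.invFunOn φ S u)|
  have hG : ∀ x ∈ S, G (φ x) = f x / |φ' x| := fun x hx => by
    simp only [G, hinj.leftInvOn_invFunOn hx]
  have himage : MeasurableSet (φ '' S) :=
    hS.image_of_continuousOn_injOn (fun x hx => (hφ x hx).continuousWithinAt) hinj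
  refine (tendsto_integral_mul_exp_cocompact ((φ '' S).indicator G)).congr fun m => ?_
  calc ∫ u, (φ '' S).indicator G u * Complex.exp (I * m * u)
      = ∫ u in φ '' S, G u * Complex.exp (I * m * u) := by
        rw [← integral_indicator himage]
        simp only [indicator_mul_left]
    _ = ∫ x in S, |φ' x| • (G (φ x) * Complex.exp (I * m * φ x)) :=
        integral_image_eq_integral_abs_deriv_smul hS hφ hinj _
    _ = ∫ x in S, f x * Complex.exp (I * m * φ x) := by
        refine setIntegral_congr_fun hS fun x hx => ?_
        have : ((|φ' x| : ℝ) : ℂ) ≠ 0 := by exact_mod_cast abs_ne_zero.2 (hφ' x hx)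
        simp only [hG x hx, Complex.real_smul]
        field_simp

theorem HasDerivAt.tendsto_nat_mul_sub {F : Type*} [NormedAddCommGroup F] [NormedSpace ℝ F]
    {f : ℝ → F} {f' : F} {x : ℝ} (hf : HasDerivAt f f' x) (ξ : ℝ) :
    Tendsto (fun n : ℕ => (n : ℝ) • (f (x + ξ / n) - f x)) atTop (𝓝 (ξ • f')) := by
  rcases eq_or_ne ξ 0 with rfl | hξ
  · simp
  have hstep : Tendsto (fun n : ℕ => ξ / n) atTop (𝓝[≠] 0) :=
    tendsto_nhdsWithin_iff.2 ⟨tendsto_const_div_atTop_nhds_zero_nat ξ, by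
      filter_upwards [eventually_ne_atTop 0] with n hn
      simp [hξ, hn]⟩
  refine ((hasDerivAt_iff_tendsto_slope_zero.1 hf).comp hstep |>.const_smul ξ).congr' ?_
  filter_upwards [eventually_ne_atTop 0] with n hn
  simp only [Function.comp_apply, smul_smul]
  congr 1
  field_simp

theorem tendsto_integral_mul_cos_mul_cos_sub {f f' : ℝ → ℝ} (hf : ∀ x, HasDerivAt f (f' x) x)
    (hf' : Continuous f') {w : ℝ → ℂ} {a b : ℝ} (hw : IntervalIntegrable w volume a b) (ξ : ℝ) :
    Tendsto (fun n : ℕ =>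
      (∫ x in a..b, w x * (cos (n * f (x + ξ / n)) * cos (n * f x) : ℝ)) -
        ∫ x in a..b, w x * (cos (n * f x + ξ * f' x) * cos (n * f x) : ℝ)) atTop (𝓝 0) := by
  have hfc : Continuous f := continuous_iff_continuousAt.2 fun x => (hf x).continuousAt
  have hdiff : Tendsto (fun n : ℕ => ∫ x in a..b,
      w x * ((cos (n * f (x + ξ / n)) - cos (n * f x + ξ * f' x)) * cos (n * f x) : ℝ))
      atTop (𝓝 0) := by
    rw [← intervalIntegral.integral_zero]
    refine intervalIntegral.tendsto_integral_filter_of_dominated_convergence (fun x => 2 * ‖w x‖)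
      (Eventually.of_forall fun n => hw.def'.1.mul (by fun_prop)) ?_ (hw.norm.const_mul 2) ?_
    · refine Eventually.of_forall fun n => Eventually.of_forall fun x _ => ?_
      rw [norm_mul, Complex.norm_real, norm_mul, mul_comm]
      gcongr
      calc ‖cos (n * f (x + ξ / n)) - cos (n * f x + ξ * f' x)‖ * ‖cos (n * f x)‖
          ≤ (1 + 1) * 1 := by
            gcongr
            · exact (norm_sub_le _ _).trans (add_le_add (abs_cos_le_one _) (abs_cos_le_one _))
            · exact abs_cos_le_one _
        _ = 2 := by norm_num
    · refine Eventually.of_forall fun x _ => ?_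
      have htaylor : Tendsto (fun n : ℕ => |n * (f (x + ξ / n) - f x) - ξ * f' x|) atTop (𝓝 0) := by
        simpa using ((hf x).tendsto_nat_mul_sub ξ).sub_const (ξ * f' x) |>.abs
      refine squeeze_zero_norm (fun n => ?_) (by simpa using htaylor.const_mul ‖w x‖)
      rw [norm_mul, Complex.norm_real, norm_mul]
      gcongr
      calc ‖cos (n * f (x + ξ / n)) - cos (n * f x + ξ * f' x)‖ * ‖cos (n * f x)‖
          ≤ |n * f (x + ξ / n) - (n * f x + ξ * f' x)| * 1 := by
            gcongr
            · exact abs_cos_sub_cos_le _ _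
            · exact abs_cos_le_one _
        _ = |n * (f (x + ξ / n) - f x) - ξ * f' x| := by ring_nf
  refine hdiff.congr fun n => ?_
  rw [← intervalIntegral.integral_sub (hw.mul_continuousOn (by fun_prop))
    (hw.mul_continuousOn (by fun_prop))]
  congr! 2 with x
  push_cast
  ring

theorem intervalIntegral.integral_zero_two_mul_of_add_eq_smul {E : Type*} [NormedAddCommGroup E]
    [NormedSpace ℝ E] {f : ℝ → E} {p c : ℝ} (hf : IntervalIntegrable f volume 0 (2 * p))
    (hfc : ∀ x, f (x + p) = c • f x) :
    ∫ x in 0..2 * p, f x = (1 + c) • ∫ x in 0..p, f x := by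
  have hp : p ∈ uIcc 0 (2 * p) := by
    rcases le_total 0 p with h | h
    · exact mem_uIcc.2 (Or.inl ⟨h, by linarith⟩)
    · exact mem_uIcc.2 (Or.inr ⟨by linarith, h⟩)
  have hshift : ∫ x in p..2 * p, f x = c • ∫ x in 0..p, f x := by
    rw [← intervalIntegral.integral_smul]
    simp_rw [← hfc]
    rw [intervalIntegral.integral_comp_add_right, zero_add, two_mul]
  rw [← integral_add_adjacent_intervals (hf.mono_set (uIcc_subset_uIcc left_mem_uIcc hp))
    (hf.mono_set (uIcc_subset_uIcc hp right_mem_uIcc)), hshift, add_smul, one_smul]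

theorem intervalIntegral.integral_mul_cos_add_mul_cos {w : ℝ → ℂ} {a b : ℝ}
    (hw : IntervalIntegrable w volume a b) {u v : ℝ → ℝ} (hu : Continuous u) (hv : Continuous v) :
    ∫ x in a..b, w x * (cos (u x + v x) * cos (u x) : ℝ) =
      ((∫ x in a..b, w x * (cos (v x) : ℂ)) +
        ∫ x in a..b, w x * (cos (2 * u x + v x) : ℂ)) / 2 := by
  rw [← intervalIntegral.integral_add (hw.mul_continuousOn (by fun_prop))
    (hw.mul_continuousOn (by fun_prop)), ← intervalIntegral.integral_div]
  refine intervalIntegral.integral_congr fun x _ => ?_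
  have hprod (p q : ℝ) : cos (p + q) * cos p = (cos q + cos (2 * p + q)) / 2 := by
    have h₁ : cos q = cos (p + q) * cos p + sin (p + q) * sin p := by rw [← cos_sub]; ring_nf
    have h₂ : cos (2 * p + q) = cos (p + q) * cos p - sin (p + q) * sin p := by
      rw [← cos_add]; ring_nf
    rw [h₁, h₂]
    ring
  simp only [hprod]
  push_cast
  ring

theorem injOn_cos_Ioo_pi_two_pi : InjOn cos (Ioo π (2 * π)) := by
  intro x hx y hy hxy
  have := injOn_cos (x₁ := 2 * π - x) (x₂ := 2 * π - y) ⟨by linarith [hx.2], by linarith [hx.1]⟩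
    ⟨by linarith [hy.2], by linarith [hy.1]⟩ (by rwa [cos_two_pi_sub, cos_two_pi_sub])
  linarith

noncomputable def chebPhase (s θ : ℝ) : ℝ := arccos (s * cos θ)

noncomputable def chebPhaseDeriv (s θ : ℝ) : ℝ := s * sin θ / √(1 - (s * cos θ) ^ 2)

section ChebPhase

variable {s : ℝ}

theorem abs_mul_cos_le (hs : |s| ≤ 1) (θ : ℝ) : |s * cos θ| ≤ 1 := by
  rw [abs_mul]
  exact mul_le_one₀ hs (abs_nonneg _) (abs_cos_le_one θ)

theorem abs_mul_cos_lt (hs : |s| < 1) (θ : ℝ) : |s * cos θ| < 1 := by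
  rw [abs_mul]
  exact mul_lt_one_of_nonneg_of_lt_one_left (abs_nonneg _) hs (abs_cos_le_one θ)

theorem Polynomial.Chebyshev.T_real_eval_mul_cos (hs : |s| ≤ 1) (n : ℤ) (θ : ℝ) :
    (T ℝ n).eval (s * cos θ) = cos (n * chebPhase s θ) := by
  obtain ⟨h₁, h₂⟩ := abs_le.1 (abs_mul_cos_le hs θ)
  rw [chebPhase, ← T_real_cos, cos_arccos h₁ h₂]

@[fun_prop]
theorem continuous_chebPhase (s : ℝ) : Continuous (chebPhase s) := by
  unfold chebPhase
  fun_prop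

theorem one_sub_mul_cos_sq_pos (hs : |s| < 1) (θ : ℝ) : 0 < 1 - (s * cos θ) ^ 2 := by
  have := abs_mul_cos_lt hs θ
  rw [sub_pos, ← sq_abs]
  nlinarith [abs_nonneg (s * cos θ)]

theorem hasDerivAt_chebPhase (hs : |s| < 1) (θ : ℝ) :
    HasDerivAt (chebPhase s) (chebPhaseDeriv s θ) θ := by
  obtain ⟨h₁, h₂⟩ := abs_lt.1 (abs_mul_cos_lt hs θ)
  refine ((hasDerivAt_arccos h₁.ne' h₂.ne).comp θ ((hasDerivAt_cos θ).const_mul s)).congr_deriv ?_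
  rw [chebPhaseDeriv]
  ring

theorem continuous_chebPhaseDeriv (hs : |s| < 1) : Continuous (chebPhaseDeriv s) := by
  unfold chebPhaseDeriv
  exact Continuous.div (by fun_prop) (by fun_prop) fun θ =>
    (sqrt_pos.2 (one_sub_mul_cos_sq_pos hs θ)).ne'

theorem chebPhaseDeriv_add_pi (s θ : ℝ) : chebPhaseDeriv s (θ + π) = -chebPhaseDeriv s θ := by
  simp only [chebPhaseDeriv, sin_add_pi, cos_add_pi, mul_neg, neg_sq, neg_div]

theorem chebPhaseDeriv_ne_zero (hs0 : s ≠ 0) (hs1 : |s| < 1) {θ : ℝ} (hθ : sin θ ≠ 0) :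
    chebPhaseDeriv s θ ≠ 0 :=
  div_ne_zero (mul_ne_zero hs0 hθ) (sqrt_pos.2 (one_sub_mul_cos_sq_pos hs1 θ)).ne'

theorem Set.InjOn.chebPhase (hs0 : s ≠ 0) (hs1 : |s| ≤ 1) {S : Set ℝ} (hS : InjOn cos S) :
    InjOn (chebPhase s) S := fun x hx y hy hxy =>
  hS hx hy <| mul_left_cancel₀ hs0 <|
    arccos_injOn (abs_le.1 (abs_mul_cos_le hs1 x)) (abs_le.1 (abs_mul_cos_le hs1 y)) hxy

end ChebPhase

section RiemannLebesgue

variable {s : ℝ}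

theorem tendsto_intervalIntegral_mul_exp_chebPhase_of_injOn (hs0 : s ≠ 0) (hs1 : |s| < 1)
    {a b : ℝ} (hab : a ≤ b) (hcos : InjOn cos (Ioo a b)) (hsin : ∀ θ ∈ Ioo a b, sin θ ≠ 0)
    (g : ℝ → ℂ) :
    Tendsto (fun m : ℝ => ∫ θ in a..b, g θ * Complex.exp (I * m * chebPhase s θ))
      (cocompact ℝ) (𝓝 0) := by
  simp_rw [intervalIntegral.integral_of_le hab, integral_Ioc_eq_integral_Ioo]
  exact tendsto_setIntegral_mul_exp_comp_cocompact measurableSet_Ioo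
    (fun θ _ => (hasDerivAt_chebPhase hs1 θ).hasDerivWithinAt) (hcos.chebPhase hs0 hs1.le)
    (fun θ hθ => chebPhaseDeriv_ne_zero hs0 hs1 (hsin θ hθ)) g

theorem tendsto_integral_mul_exp_chebPhase (hs0 : s ≠ 0) (hs1 : |s| < 1) {g : ℝ → ℂ}
    (hg : IntervalIntegrable g volume 0 (2 * π)) :
    Tendsto (fun m : ℝ => ∫ θ in 0..2 * π, g θ * Complex.exp (I * m * chebPhase s θ))
      (cocompact ℝ) (𝓝 0) := by
  have hπ : π ≤ 2 * π := by linarith [pi_pos]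
  have hleft := tendsto_intervalIntegral_mul_exp_chebPhase_of_injOn hs0 hs1 pi_pos.le
    (injOn_cos.mono Ioo_subset_Icc_self) (fun θ hθ => (sin_pos_of_pos_of_lt_pi hθ.1 hθ.2).ne') g
  have hright := tendsto_intervalIntegral_mul_exp_chebPhase_of_injOn hs0 hs1 hπ
    injOn_cos_Ioo_pi_two_pi (fun θ hθ => by
      rw [← neg_neg (sin θ), ← sin_sub_pi]
      exact neg_ne_zero.2 (sin_pos_of_pos_of_lt_pi (by linarith [hθ.1]) (by linarith [hθ.2])).ne')
    g
  refine (add_zero (0 : ℂ) ▸ hleft.add hright).congr fun m => ?_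
  have hint : IntervalIntegrable (fun θ => g θ * Complex.exp (I * m * chebPhase s θ))
      volume 0 (2 * π) := hg.mul_continuousOn (by fun_prop)
  exact intervalIntegral.integral_add_adjacent_intervals
    (hint.mono_set (uIcc_subset_uIcc_left (by simp [hπ, pi_pos.le])))
    (hint.mono_set (uIcc_subset_uIcc_right (by simp [hπ, pi_pos.le])))

theorem tendsto_integral_mul_cos_chebPhase (hs0 : s ≠ 0) (hs1 : |s| < 1) {g : ℝ → ℂ}
    (hg : IntervalIntegrable g volume 0 (2 * π)) {ψ : ℝ → ℝ} (hψ : Continuous ψ) :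
    Tendsto (fun m : ℝ => ∫ θ in 0..2 * π, g θ * (cos (m * chebPhase s θ + ψ θ) : ℂ))
      (cocompact ℝ) (𝓝 0) := by
  have hplus := tendsto_integral_mul_exp_chebPhase hs0 hs1
    (hg.mul_continuousOn (g := fun θ => Complex.exp (I * ψ θ) / 2) (by fun_prop))
  have hminus := (tendsto_integral_mul_exp_chebPhase hs0 hs1
    (hg.mul_continuousOn (g := fun θ => Complex.exp (-(I * ψ θ)) / 2) (by fun_prop))).comp
    (tendsto_cocompact_mul_left₀ (neg_ne_zero.2 one_ne_zero))
  refine (add_zero (0 : ℂ) ▸ hplus.add hminus).congr fun m => ?_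
  rw [Function.comp_apply, ← intervalIntegral.integral_add
    ((hg.mul_continuousOn (by fun_prop)).mul_continuousOn (by fun_prop))
    ((hg.mul_continuousOn (by fun_prop)).mul_continuousOn (by fun_prop))]
  refine intervalIntegral.integral_congr fun θ _ => ?_
  have hcos : ((cos (m * chebPhase s θ + ψ θ) : ℝ) : ℂ) =
      (Complex.exp (I * ψ θ) * Complex.exp (I * m * chebPhase s θ) +
        Complex.exp (-(I * ψ θ)) * Complex.exp (I * ↑(-1 * m) * chebPhase s θ)) / 2 := by
    rw [Complex.ofReal_cos, Complex.cos, ← Complex.exp_add, ← Complex.exp_add]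
    push_cast
    ring_nf
  simp only [hcos]
  ring

end RiemannLebesgue

section Ank

variable {s : ℝ}

theorem integral_exp_mul_cos_chebPhaseDeriv_zero_pi (hs : 0 < s) (k : ℤ) (ξ : ℝ) :
    ∫ θ in 0..π, Complex.exp (I * k * θ) * (cos (ξ * chebPhaseDeriv s θ) : ℂ) =
      ∫ x in (-s)..s, ek s k x * (cos (ξ * √(s ^ 2 - x ^ 2) / √(1 - x ^ 2)) : ℂ) *
        ((√(s ^ 2 - x ^ 2))⁻¹ : ℝ) := by
  have hcov := integral_Icc_deriv_smul_of_deriv_nonpos (f := fun θ => s * cos θ)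
    (f' := fun θ => s * -sin θ) (by fun_prop) (fun θ _ => (hasDerivAt_cos θ).const_mul s)
    (fun θ hθ => by nlinarith [sin_pos_of_pos_of_lt_pi hθ.1 hθ.2]) pi_pos.le
    (g := fun x => ek s k x * (cos (ξ * √(s ^ 2 - x ^ 2) / √(1 - x ^ 2)) : ℂ) *
        ((√(s ^ 2 - x ^ 2))⁻¹ : ℝ))
  simp only [cos_pi, cos_zero, mul_neg, mul_one] at hcov
  rw [intervalIntegral.integral_of_le (neg_le_self hs.le), ← integral_Icc_eq_integral_Ioc,
    ← neg_neg (∫ x in Icc (-s) s, _), ← hcov, ← integral_neg, integral_Icc_eq_integral_Ioo,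
    intervalIntegral.integral_of_le pi_pos.le, integral_Ioc_eq_integral_Ioo]
  refine setIntegral_congr_fun measurableSet_Ioo fun θ hθ => ?_
  have hsin : 0 < sin θ := sin_pos_of_pos_of_lt_pi hθ.1 hθ.2
  have hsqrt : √(s ^ 2 - (s * cos θ) ^ 2) = s * sin θ := by
    rw [← sqrt_sq (by positivity : 0 ≤ s * sin θ)]
    congr 1
    linear_combination -s ^ 2 * sin_sq_add_cos_sq θ
  have hek : ek s k (s * cos θ) = Complex.exp (I * k * θ) := by
    rw [ek, mul_div_cancel_left₀ _ hs.ne', arccos_cos hθ.1.le hθ.2.le]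
  simp only [hsqrt, hek, chebPhaseDeriv, Complex.real_smul]
  have hne : ((s * sin θ : ℝ) : ℂ) ≠ 0 := by exact_mod_cast (mul_pos hs hsin).ne'
  rw [mul_div_assoc, Complex.ofReal_neg, Complex.ofReal_inv]
  field_simp

theorem Ank_eq_integral (hs : |s| ≤ 1) (k : ℤ) (ξ : ℝ) (n : ℕ) :
    Ank s k ξ n = ((1 / (2 * π) : ℝ) : ℂ) * ∫ θ in 0..2 * π, Complex.exp (I * k * θ) *
      (cos (n * chebPhase s (θ + ξ / n)) * cos (n * chebPhase s θ) : ℝ) := by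
  rw [Ank]
  congr 1
  refine intervalIntegral.integral_congr fun θ _ => ?_
  simp only [Polynomial.Chebyshev.T_real_eval_mul_cos hs, Int.cast_natCast]
  push_cast
  ring

theorem integral_exp_mul_cos_chebPhaseDeriv (hs0 : 0 < s) (hs1 : s < 1) (k : ℤ) (ξ : ℝ) :
    ∫ θ in 0..2 * π, Complex.exp (I * k * θ) * (cos (ξ * chebPhaseDeriv s θ) : ℂ) =
      ((1 + (-1 : ℝ) ^ k : ℝ) : ℂ) * ∫ x in (-s)..s, ek s k x *
        (cos (ξ * √(s ^ 2 - x ^ 2) / √(1 - x ^ 2)) : ℂ) * ((√(s ^ 2 - x ^ 2))⁻¹ : ℝ) := by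
  have hφ' := continuous_chebPhaseDeriv (abs_lt.2 ⟨by linarith, hs1⟩)
  have hexp : Complex.exp (I * k * π) = (-1) ^ k := by
    rw [show I * k * π = k * (π * I) by ring, Complex.exp_int_mul, Complex.exp_pi_mul_I]
  rw [intervalIntegral.integral_zero_two_mul_of_add_eq_smul (c := (-1) ^ k)
    (Continuous.intervalIntegrable (by fun_prop) _ _) fun θ => ?_,
    integral_exp_mul_cos_chebPhaseDeriv_zero_pi hs0, Complex.real_smul]
  rw [chebPhaseDeriv_add_pi, mul_neg, cos_neg, Complex.real_smul, Complex.ofReal_add,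
    mul_add, Complex.exp_add, hexp]
  push_cast
  ring

end Ank

/-- The limit of `A_{n,k}(ξ)` as `n → ∞`. -/
theorem Ank_limit (s : ℝ) (hs0 : 0 < s) (hs1 : s < 1) (k : ℤ) (ξ : ℝ) :
    Filter.Tendsto (fun n : ℕ => Ank s k ξ n) Filter.atTop
      (nhds ((((1 + (-1 : ℝ) ^ k) / (4 * Real.pi) : ℝ) : ℂ) *
        ∫ x in (-s)..s,
          ek s k x *
            Complex.ofReal (Real.cos (ξ * Real.sqrt (s ^ 2 - x ^ 2) / Real.sqrt (1 - x ^ 2))) *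
            Complex.ofReal ((Real.sqrt (s ^ 2 - x ^ 2))⁻¹))) := by
  have hs : |s| < 1 := abs_lt.2 ⟨by linarith, hs1⟩
  have he : IntervalIntegrable (fun θ : ℝ => Complex.exp (I * k * θ)) volume 0 (2 * π) :=
    Continuous.intervalIntegrable (by fun_prop) _ _
  have hφ' := continuous_chebPhaseDeriv hs
  have htaylor := tendsto_integral_mul_cos_mul_cos_sub (hasDerivAt_chebPhase hs) hφ' he ξ
  have hosc : Tendsto (fun n : ℕ => ∫ θ in 0..2 * π, Complex.exp (I * k * θ) *
      (cos (2 * (n * chebPhase s θ) + ξ * chebPhaseDeriv s θ) : ℂ)) atTop (𝓝 0) := by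
    have h2n : Tendsto (fun n : ℕ => 2 * (n : ℝ)) atTop (cocompact ℝ) :=
      (tendsto_natCast_atTop_atTop.const_mul_atTop two_pos).mono_right atTop_le_cocompact
    simpa only [Function.comp_def, mul_assoc] using
      (tendsto_integral_mul_cos_chebPhase hs0.ne' hs he (ψ := fun θ => ξ * chebPhaseDeriv s θ)
        (by fun_prop)).comp h2n
  convert (htaylor.add ((hosc.const_add (∫ θ in 0..2 * π, Complex.exp (I * k * θ) *
    (cos (ξ * chebPhaseDeriv s θ) : ℂ))).div_const 2)).const_mul ((1 / (2 * π) : ℝ) : ℂ)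
    using 2 with n
  · rw [Ank_eq_integral hs.le, intervalIntegral.integral_mul_cos_add_mul_cos he (by fun_prop)
      (by fun_prop), sub_add_cancel]
  · rw [integral_exp_mul_cos_chebPhaseDeriv hs0 hs1]
    push_cast
    field_simp
    ring
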